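/- For any MAC W : X1 × X2 → Y on finite alphabets and positive integers k1, k2, the non-signaling assisted success probability satisfies S^NS(W,k1,k2) ≤ min(|X1|/k1, |X2|/k2, |Y|/(k1 k2)). -/

import Mathlib

open Finset

/-- A tripartite non-signaling box `P(x1,x2,(j1,j2)|i1,i2,y)` between the two senders
and the receiver, with `k1` and `k2` messages.  Arguments of `P` are in the order
`x1 x2 j1 j2 i1 i2 y`. -/
def IsNSBox {X1 X2 Y : Type*} [Fintype X1] [Fintype X2] [Fintype Y] (k1 k2 : ℕ)
    (P : X1 → X2 → Fin k1 → Fin k2 → Fin k1 → Fin k2 → Y → ℝ) : Prop :=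
  (∀ x1 x2 j1 j2 i1 i2 y, 0 ≤ P x1 x2 j1 j2 i1 i2 y) ∧
  (∀ i1 i2 y, ∑ x1, ∑ x2, ∑ j1, ∑ j2, P x1 x2 j1 j2 i1 i2 y = 1) ∧
  (∀ x2 j1 j2 i1 i1' i2 y,
    ∑ x1, P x1 x2 j1 j2 i1 i2 y = ∑ x1, P x1 x2 j1 j2 i1' i2 y) ∧
  (∀ x1 j1 j2 i1 i2 i2' y,
    ∑ x2, P x1 x2 j1 j2 i1 i2 y = ∑ x2, P x1 x2 j1 j2 i1 i2' y) ∧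
  (∀ x1 x2 i1 i2 y y',
    ∑ j1, ∑ j2, P x1 x2 j1 j2 i1 i2 y = ∑ j1, ∑ j2, P x1 x2 j1 j2 i1 i2 y')

/-- `S^{NS}(W,k1,k2)`: maximum joint success probability with (tripartite)
non-signaling assistance between both senders and the receiver. -/
noncomputable def SNS {X1 X2 Y : Type*} [Fintype X1] [Fintype X2] [Fintype Y]
    (W : X1 → X2 → Y → ℝ) (k1 k2 : ℕ) : ℝ :=
  sSup {s : ℝ | ∃ P : X1 → X2 → Fin k1 → Fin k2 → Fin k1 → Fin k2 → Y → ℝ,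
    IsNSBox k1 k2 P ∧
    s = (1 / ((k1 : ℝ) * (k2 : ℝ))) * ∑ i1, ∑ i2, ∑ x1, ∑ x2, ∑ y,
      W x1 x2 y * P x1 x2 i1 i2 i1 i2 y}

/-! Each bound sums the success probability over a set of indices on which the non-signaling
constraints make a probability distribution appear. Because the receiver's guess `(j1, j2)` has a
law independent of the inputs `(i1, i2)`, for each fixed `y` the diagonal terms `j = i` sum to at
most `1`; with `W ≤ 1` this gives `|Y|`. For fixed `x1` and `i2`, dropping the constraint on `x1`
and letting sender 1's input be a fixed `i1₀` bounds the diagonal terms by the joint law of `x2`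
and the guess, which does not depend on `y`; so the channel sums out and the total is at most `1`,
giving `|X1| k2`. The bound `k1 |X2|` follows by exchanging the senders. -/

section NSBox

variable {X1 X2 Y : Type*} [Fintype X1] [Fintype X2] [Fintype Y] {k1 k2 : ℕ}
  {W : X1 → X2 → Y → ℝ}
  {P : X1 → X2 → Fin k1 → Fin k2 → Fin k1 → Fin k2 → Y → ℝ}

def successSum (W : X1 → X2 → Y → ℝ)
    (P : X1 → X2 → Fin k1 → Fin k2 → Fin k1 → Fin k2 → Y → ℝ) : ℝ :=
  ∑ i1, ∑ i2, ∑ x1, ∑ x2, ∑ y, W x1 x2 y * P x1 x2 i1 i2 i1 i2 y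

def swapSenders (P : X1 → X2 → Fin k1 → Fin k2 → Fin k1 → Fin k2 → Y → ℝ) :
    X2 → X1 → Fin k2 → Fin k1 → Fin k2 → Fin k1 → Y → ℝ :=
  fun x2 x1 j2 j1 i2 i1 y => P x1 x2 j1 j2 i1 i2 y

namespace IsNSBox

theorem swapSenders (hP : IsNSBox k1 k2 P) : IsNSBox k2 k1 (swapSenders P) := by
  obtain ⟨hnonneg, hnorm, hsig1, hsig2, hsigY⟩ := hP
  refine ⟨fun x2 x1 j2 j1 i2 i1 y => hnonneg x1 x2 j1 j2 i1 i2 y, fun i2 i1 y => ?_,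
    fun x1 j2 j1 i2 i2' i1 y => hsig2 x1 j1 j2 i1 i2 i2' y,
    fun x2 j2 j1 i2 i1 i1' y => hsig1 x2 j1 j2 i1 i1' i2 y,
    fun x2 x1 i2 i1 y y' => ?_⟩
  · rw [← hnorm i1 i2 y, sum_comm]
    exact sum_congr rfl fun x1 _ => sum_congr rfl fun x2 _ => sum_comm
  · exact sum_comm.trans ((hsigY x1 x2 i1 i2 y y').trans sum_comm)

theorem sum_senders_eq (hP : IsNSBox k1 k2 P) (j1 : Fin k1) (j2 : Fin k2)
    (i1 i1' : Fin k1) (i2 i2' : Fin k2) (y : Y) :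
    ∑ x1, ∑ x2, P x1 x2 j1 j2 i1 i2 y = ∑ x1, ∑ x2, P x1 x2 j1 j2 i1' i2' y := by
  obtain ⟨-, -, hsig1, hsig2, -⟩ := hP
  calc ∑ x1, ∑ x2, P x1 x2 j1 j2 i1 i2 y
      = ∑ x2, ∑ x1, P x1 x2 j1 j2 i1' i2 y := by
        rw [sum_comm]; exact sum_congr rfl fun x2 _ => hsig1 x2 j1 j2 i1 i1' i2 y
    _ = ∑ x1, ∑ x2, P x1 x2 j1 j2 i1' i2' y := by
        rw [sum_comm]; exact sum_congr rfl fun x1 _ => hsig2 x1 j1 j2 i1' i2 i2' y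

theorem sum_diag_sum_senders_eq_one (hP : IsNSBox k1 k2 P) (hk1 : 0 < k1) (hk2 : 0 < k2)
    (y : Y) : ∑ i1, ∑ i2, ∑ x1, ∑ x2, P x1 x2 i1 i2 i1 i2 y = 1 := by
  calc ∑ i1, ∑ i2, ∑ x1, ∑ x2, P x1 x2 i1 i2 i1 i2 y
      = ∑ j1, ∑ j2, ∑ x1, ∑ x2, P x1 x2 j1 j2 ⟨0, hk1⟩ ⟨0, hk2⟩ y :=
        sum_congr rfl fun i1 _ => sum_congr rfl fun i2 _ => hP.sum_senders_eq _ _ _ _ _ _ y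
    _ = ∑ x1, ∑ x2, ∑ j1, ∑ j2, P x1 x2 j1 j2 ⟨0, hk1⟩ ⟨0, hk2⟩ y := by
        rw [sum_comm_cycle]; exact sum_congr rfl fun _ _ => sum_comm_cycle
    _ = 1 := hP.2.1 _ _ y

theorem sum_diag_le_marginal_fst (hP : IsNSBox k1 k2 P) (i1₀ : Fin k1) (x1 : X1) (x2 : X2)
    (i2 : Fin k2) (y : Y) :
    ∑ i1, P x1 x2 i1 i2 i1 i2 y ≤ ∑ x1', ∑ j1, ∑ j2, P x1' x2 j1 j2 i1₀ i2 y := by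
  obtain ⟨hnonneg, -, hsig1, -, -⟩ := hP
  calc ∑ i1, P x1 x2 i1 i2 i1 i2 y
      ≤ ∑ i1, ∑ x1', P x1' x2 i1 i2 i1 i2 y := by
        gcongr with i1
        exact single_le_sum (fun x1' _ => hnonneg x1' x2 i1 i2 i1 i2 y) (mem_univ x1)
    _ = ∑ i1, ∑ x1', P x1' x2 i1 i2 i1₀ i2 y :=
        sum_congr rfl fun i1 _ => hsig1 x2 i1 i2 i1 i1₀ i2 y
    _ ≤ ∑ j1, ∑ j2, ∑ x1', P x1' x2 j1 j2 i1₀ i2 y := by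
        gcongr with j1
        exact single_le_sum (f := fun j2 => ∑ x1', P x1' x2 j1 j2 i1₀ i2 y)
          (fun j2 _ => sum_nonneg fun x1' _ => hnonneg x1' x2 j1 j2 i1₀ i2 y) (mem_univ i2)
    _ = ∑ x1', ∑ j1, ∑ j2, P x1' x2 j1 j2 i1₀ i2 y := sum_comm_cycle

end IsNSBox

theorem sum_success_at_x1_le_one (hW0 : ∀ x1 x2 y, 0 ≤ W x1 x2 y)
    (hW1 : ∀ x1 x2, ∑ y, W x1 x2 y = 1) (hP : IsNSBox k1 k2 P) (i1₀ : Fin k1) (x1 : X1)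
    (i2 : Fin k2) :
    ∑ i1, ∑ x2, ∑ y, W x1 x2 y * P x1 x2 i1 i2 i1 i2 y ≤ 1 := by
  rcases isEmpty_or_nonempty Y with hY | ⟨⟨y₀⟩⟩
  · simp
  have hdiag := hP.sum_diag_le_marginal_fst i1₀ x1
  obtain ⟨-, hnorm, -, -, hsigY⟩ := hP
  -- The bound is the same for every output `y`, so `W (· | x1, x2)` can be summed out.
  set M : X2 → ℝ := fun x2 => ∑ x1', ∑ j1, ∑ j2, P x1' x2 j1 j2 i1₀ i2 y₀
  have hM : ∀ x2 y, ∑ i1, P x1 x2 i1 i2 i1 i2 y ≤ M x2 := fun x2 y =>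
    (hdiag x2 i2 y).trans_eq
      (sum_congr rfl fun x1' _ => hsigY x1' x2 i1₀ i2 y y₀)
  calc ∑ i1, ∑ x2, ∑ y, W x1 x2 y * P x1 x2 i1 i2 i1 i2 y
      = ∑ x2, ∑ y, W x1 x2 y * ∑ i1, P x1 x2 i1 i2 i1 i2 y := by
        simp only [mul_sum]; exact sum_comm_cycle.symm
    _ ≤ ∑ x2, ∑ y, W x1 x2 y * M x2 := by
        gcongr with x2 _ y
        · exact hW0 x1 x2 y
        · exact hM x2 y
    _ = ∑ x2, M x2 := by simp only [← sum_mul, hW1, one_mul]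
    _ = 1 := sum_comm.trans (hnorm i1₀ i2 y₀)

theorem successSum_le_card_X1_mul (hW0 : ∀ x1 x2 y, 0 ≤ W x1 x2 y)
    (hW1 : ∀ x1 x2, ∑ y, W x1 x2 y = 1) (hP : IsNSBox k1 k2 P) (hk1 : 0 < k1) :
    successSum W P ≤ Fintype.card X1 * k2 :=
  calc successSum W P
      = ∑ x1, ∑ i2, ∑ i1, ∑ x2, ∑ y, W x1 x2 y * P x1 x2 i1 i2 i1 i2 y :=
        sum_comm_cycle.trans (sum_congr rfl fun _ _ => sum_comm)
    _ ≤ ∑ _x1 : X1, ∑ _i2 : Fin k2, (1 : ℝ) := by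
        gcongr with x1 _ i2
        exact sum_success_at_x1_le_one hW0 hW1 hP ⟨0, hk1⟩ x1 i2
    _ = Fintype.card X1 * k2 := by simp

theorem successSum_swapSenders :
    successSum (fun x2 x1 y => W x1 x2 y) (swapSenders P) = successSum W P :=
  sum_comm.trans (sum_congr rfl fun _ _ => sum_congr rfl fun _ _ => sum_comm)

theorem successSum_le_mul_card_X2 (hW0 : ∀ x1 x2 y, 0 ≤ W x1 x2 y)
    (hW1 : ∀ x1 x2, ∑ y, W x1 x2 y = 1) (hP : IsNSBox k1 k2 P) (hk2 : 0 < k2) :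
    successSum W P ≤ k1 * Fintype.card X2 := by
  rw [← successSum_swapSenders, mul_comm]
  exact successSum_le_card_X1_mul (fun x2 x1 => hW0 x1 x2) (fun x2 x1 => hW1 x1 x2)
    hP.swapSenders hk2

theorem successSum_le_card_Y (hW0 : ∀ x1 x2 y, 0 ≤ W x1 x2 y)
    (hW1 : ∀ x1 x2, ∑ y, W x1 x2 y = 1) (hP : IsNSBox k1 k2 P) (hk1 : 0 < k1) (hk2 : 0 < k2) :
    successSum W P ≤ Fintype.card Y := by
  have hW_le_one : ∀ x1 x2 y, W x1 x2 y ≤ 1 := fun x1 x2 y =>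
    hW1 x1 x2 ▸ single_le_sum (fun y _ => hW0 x1 x2 y) (mem_univ y)
  calc successSum W P
      ≤ ∑ i1, ∑ i2, ∑ x1, ∑ x2, ∑ y, P x1 x2 i1 i2 i1 i2 y := by
        unfold successSum
        gcongr with i1 _ i2 _ x1 _ x2 _ y
        exact mul_le_of_le_one_left (hP.1 x1 x2 i1 i2 i1 i2 y) (hW_le_one x1 x2 y)
    _ = ∑ y, ∑ i1, ∑ i2, ∑ x1, ∑ x2, P x1 x2 i1 i2 i1 i2 y :=
        (sum_congr rfl fun _ _ => sum_congr rfl fun _ _ => sum_comm_cycle).trans sum_comm_cycle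
    _ = Fintype.card Y := by simp [hP.sum_diag_sum_senders_eq_one hk1 hk2]

end NSBox

/-- `S^{NS}(W,k1,k2) ≤ min(|X1|/k1, |X2|/k2, |Y|/(k1 k2))`. -/
theorem SNS_le_min {X1 X2 Y : Type*} [Fintype X1] [Fintype X2] [Fintype Y]
    (W : X1 → X2 → Y → ℝ)
    (hW0 : ∀ x1 x2 y, 0 ≤ W x1 x2 y)
    (hW1 : ∀ x1 x2, ∑ y, W x1 x2 y = 1)
    (k1 k2 : ℕ) (hk1 : 0 < k1) (hk2 : 0 < k2) :
    SNS W k1 k2 ≤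
      min ((Fintype.card X1 : ℝ) / (k1 : ℝ))
        (min ((Fintype.card X2 : ℝ) / (k2 : ℝ))
          ((Fintype.card Y : ℝ) / ((k1 : ℝ) * (k2 : ℝ)))) := by
  refine Real.sSup_le ?_ (by positivity)
  rintro _ ⟨P, hP, rfl⟩
  change 1 / _ * successSum W P ≤ _
  rw [one_div_mul_eq_div]
  refine le_min ?_ (le_min ?_ ?_)
  · calc successSum W P / (k1 * k2) ≤ Fintype.card X1 * k2 / (k1 * k2) := by
          gcongr; exact successSum_le_card_X1_mul hW0 hW1 hP hk1
      _ = Fintype.card X1 / k1 := mul_div_mul_right _ _ (by positivity)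
  · calc successSum W P / (k1 * k2) ≤ k1 * Fintype.card X2 / (k1 * k2) := by
          gcongr; exact successSum_le_mul_card_X2 hW0 hW1 hP hk2
      _ = Fintype.card X2 / k2 := mul_div_mul_left _ _ (by positivity)
  · gcongr
    exact successSum_le_card_Y hW0 hW1 hP hk1 hk2
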